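/- Let u_0, u_1, u_2 be the standard basis vectors of the F_2-vector space F_2^3, and let e_{p,q} ∈ F_2^{2×2} denote the standard basis matrices. Define A_{0,0} = u_0, A_{0,1} = u_1, A_{1,0} = u_1, A_{1,1} = u_2. Then the tensor T_8 = ∑_{i=0}^{1} ∑_{j=0}^{1} ∑_{k=0}^{1} A_{i,j} ⊗ e_{j,k} ⊗ e_{k,i} ∈ F_2^3 ⊗ F_2^{2×2} ⊗ F_2^{2×2} has tensor rank at least 6. (This is the 2×2 matrix multiplication tensor restricted to symmetric first matrices A, i.e., a_{1,0} = a_{0,1}.) -/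

import Mathlib

open TensorProduct

/-- The standard basis matrix of `F_2^{2×2}` with a `1` in position `(p,q)`. -/
def e (p q : Fin 2) : Matrix (Fin 2) (Fin 2) (ZMod 2) :=
  Matrix.single p q 1

/-- The standard basis vectors of `F_2^3`. -/
def u (i : Fin 3) : Fin 3 → ZMod 2 := Pi.single i 1

/-- The first-factor entries `A₀₀ = u₀, A₀₁ = u₁, A₁₀ = u₁, A₁₁ = u₂`. -/
def A : Fin 2 → Fin 2 → (Fin 3 → ZMod 2) :=
  ![![u 0, u 1], ![u 1, u 2]]

namespace T8Aux

abbrev F := ZMod 2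
abbrev V := Fin 3 → F
abbrev M := Matrix (Fin 2) (Fin 2) F
abbrev M4 := Matrix (Fin 2 × Fin 2) (Fin 2 × Fin 2) F

def dotl (c : V) : V →ₗ[F] F where
  toFun x := ∑ i, c i * x i
  map_add' x y := by simp [mul_add, Finset.sum_add_distrib]
  map_smul' m x := by simp [Finset.mul_sum]; ring_nf; simp [mul_comm, mul_left_comm]

def outerB : M →ₗ[F] M →ₗ[F] M4 :=
  LinearMap.mk₂ F (fun v w => Matrix.of fun p q => v p.1 p.2 * w q.1 q.2)
    (by intros; ext p q; simp [add_mul])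
    (by intros; ext p q; simp [Matrix.smul_apply, mul_assoc])
    (by intros; ext p q; simp [mul_add])
    (by intros; ext p q; simp [Matrix.smul_apply]; ring)

noncomputable def Phi (c : V) : (V ⊗[F] (M ⊗[F] M)) →ₗ[F] M4 :=
  TensorProduct.lift ((dotl c).smulRight (TensorProduct.lift outerB))

lemma phi_tmul (c : V) (x : V) (v w : M) :
    Phi c (x ⊗ₜ[F] (v ⊗ₜ[F] w)) =
      (∑ i, c i * x i) • Matrix.of (fun p q => v p.1 p.2 * w q.1 q.2) := by
  simp [Phi, dotl, outerB]

lemma phi_T8 (c : V) :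
    Phi c (∑ i : Fin 2, ∑ j : Fin 2, ∑ k : Fin 2,
          A i j ⊗ₜ[ZMod 2] (e j k ⊗ₜ[ZMod 2] e k i)) =
      Matrix.of (fun p q => if p.2 = q.1 then ∑ i, c i * A q.2 p.1 i else 0) := by
  simp only [map_sum, phi_tmul]
  ext ⟨p1, p2⟩ ⟨q1, q2⟩
  simp only [Fin.sum_univ_two, Matrix.add_apply, Matrix.smul_apply, Matrix.of_apply]
  fin_cases p1 <;> fin_cases p2 <;> fin_cases q1 <;> fin_cases q2 <;>
    simp [e, A, u, Matrix.single, Fin.sum_univ_three, Pi.single]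

lemma myrank_add_le {m n : Type*} [Fintype m] [Fintype n] (A B : Matrix m n F) :
    (A + B).rank ≤ A.rank + B.rank := by
  have hr : LinearMap.range (A + B).mulVecLin ≤
      LinearMap.range A.mulVecLin ⊔ LinearMap.range B.mulVecLin := by
    rw [Matrix.mulVecLin_add]
    rintro x ⟨y, rfl⟩
    exact Submodule.add_mem_sup (LinearMap.mem_range_self _ y) (LinearMap.mem_range_self _ y)
  calc (A + B).rank = Module.finrank F (LinearMap.range (A + B).mulVecLin) := rfl
    _ ≤ Module.finrank F ↥(LinearMap.range A.mulVecLin ⊔ LinearMap.range B.mulVecLin) :=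
        Submodule.finrank_mono hr
    _ ≤ _ := Submodule.finrank_add_le_finrank_add_finrank _ _

lemma myrank_vecMulVec_le {m n : Type*} [Fintype m] [Fintype n] [DecidableEq n]
    (a : m → F) (b : n → F) : (Matrix.vecMulVec a b).rank ≤ 1 := by
  rw [Matrix.vecMulVec_eq (Fin 1)]
  calc (Matrix.replicateCol (Fin 1) a * Matrix.replicateRow (Fin 1) b).rank ≤ (Matrix.replicateRow (Fin 1) b).rank :=
        Matrix.rank_mul_le_right _ _
    _ ≤ 1 := by simpa using Matrix.rank_le_card_height (Matrix.replicateRow (Fin 1) b)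

lemma rank_sum_le {ι : Type*} (s : Finset ι) (f : ι → M4) (g : ι → ℕ)
    (h : ∀ i ∈ s, (f i).rank ≤ g i) : (∑ i ∈ s, f i).rank ≤ ∑ i ∈ s, g i := by
  induction s using Finset.cons_induction with
  | empty => simp [Matrix.rank_zero]
  | cons i s hi ih =>
    rw [Finset.sum_cons, Finset.sum_cons]
    exact le_trans (myrank_add_le _ _)
      (Nat.add_le_add (h i (Finset.mem_cons_self _ _))
        (ih fun j hj => h j (Finset.mem_cons_of_mem hj)))

lemma rank_term_le (z : F) (v w : M) :
    ((z • Matrix.of (fun p q => v p.1 p.2 * w q.1 q.2) : M4)).rank ≤ z.val := by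
  have hvm : (Matrix.of (fun p q => v p.1 p.2 * w q.1 q.2) : M4) =
      Matrix.vecMulVec (fun p => v p.1 p.2) (fun q => w q.1 q.2) := by
    ext p q; simp [Matrix.vecMulVec]
  rcases (show z = 0 ∨ z = 1 by revert z; decide) with rfl | rfl
  · simp [Matrix.rank_zero]
  · have h1 : (1 : F).val = 1 := rfl
    simpa [hvm, h1] using myrank_vecMulVec_le (fun p : Fin 2 × Fin 2 => v p.1 p.2)
      (fun q : Fin 2 × Fin 2 => w q.1 q.2)

/-- The seven nonzero functionals. -/
def cs : Fin 7 → V :=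
  ![![1,0,0], ![0,1,0], ![0,0,1], ![1,1,0], ![1,0,1], ![0,1,1], ![1,1,1]]

def N : Fin 7 → ℕ := ![2, 4, 2, 4, 4, 4, 2]

lemma rank_ge_four (X : M4) (Y : M4) (h : Y * X = 1) : 4 ≤ X.rank := by
  have h1 : (Y * X).rank = 4 := by rw [h, Matrix.rank_one]; rfl
  have := Matrix.rank_mul_le_right Y X
  omega

lemma rank_ge_two (X : M4) (P : Matrix (Fin 2) (Fin 2 × Fin 2) F)
    (Q : Matrix (Fin 2 × Fin 2) (Fin 2) F) (h : P * X * Q = 1) : 2 ≤ X.rank := by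
  have h1 : (P * X * Q).rank = 2 := by rw [h, Matrix.rank_one]; rfl
  have h2 := Matrix.rank_mul_le_left (P * X) Q
  have h3 := Matrix.rank_mul_le_right P X
  omega

lemma count_le (z : V) : ∑ i : Fin 7, (∑ j, cs i j * z j).val ≤ 4 := by
  revert z; decide

end T8Aux

open T8Aux in
/-- `T₈ = ∑ i j k, A i j ⊗ e j k ⊗ e k i` has tensor rank at least 6. -/
theorem rank_T8_ge_six (r : ℕ)
    (a : Fin r → (Fin 3 → ZMod 2))
    (v w : Fin r → Matrix (Fin 2) (Fin 2) (ZMod 2))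
    (h : (∑ i : Fin 2, ∑ j : Fin 2, ∑ k : Fin 2,
          A i j ⊗ₜ[ZMod 2] (e j k ⊗ₜ[ZMod 2] e k i))
      = ∑ t : Fin r, a t ⊗ₜ[ZMod 2] (v t ⊗ₜ[ZMod 2] w t)) :
    6 ≤ r := by
  -- the seven slice matrices and their rank lower bounds
  have hlow : ∀ i : Fin 7, N i ≤
      (Phi (cs i) (∑ i : Fin 2, ∑ j : Fin 2, ∑ k : Fin 2,
          A i j ⊗ₜ[ZMod 2] (e j k ⊗ₜ[ZMod 2] e k i))).rank := by
    intro i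
    rw [phi_T8]
    fin_cases i
    · exact rank_ge_two _ (Matrix.of ![fun p => if p = (0,0) then 1 else 0,
        fun p => if p = (0,1) then 1 else 0])
        (Matrix.of fun p => ![if p = (0,0) then 1 else 0, if p = (1,0) then 1 else 0])
        (by decide)
    · exact rank_ge_four _ (Matrix.of fun p q =>
        if (p,q) ∈ [((0,0),(1,0)),((0,1),(0,0)),((1,0),(1,1)),((1,1),(0,1))].toFinset
        then 1 else 0) (by decide)
    · exact rank_ge_two _ (Matrix.of ![fun p => if p = (1,0) then 1 else 0,
        fun p => if p = (1,1) then 1 else 0])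
        (Matrix.of fun p => ![if p = (0,1) then 1 else 0, if p = (1,1) then 1 else 0])
        (by decide)
    · exact rank_ge_four _ (Matrix.of fun p q =>
        if (p,q) ∈ [((0,0),(1,0)),((0,1),(0,0)),((0,1),(1,0)),((1,0),(1,1)),
          ((1,1),(0,1)),((1,1),(1,1))].toFinset then 1 else 0) (by decide)
    · exact rank_ge_four _ (Matrix.of fun p q =>
        if (p,q) ∈ [((0,0),(0,0)),((0,1),(1,0)),((1,0),(0,1)),((1,1),(1,1))].toFinset
        then 1 else 0) (by decide)
    · exact rank_ge_four _ (Matrix.of fun p q =>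
        if (p,q) ∈ [((0,0),(0,0)),((0,0),(1,0)),((0,1),(0,0)),((1,0),(0,1)),
          ((1,0),(1,1)),((1,1),(0,1))].toFinset then 1 else 0) (by decide)
    · exact rank_ge_two _ (Matrix.of ![fun p => if p = (0,0) then 1 else 0,
        fun p => if p = (0,1) then 1 else 0])
        (Matrix.of fun p => ![if p = (0,0) then 1 else 0, if p = (1,0) then 1 else 0])
        (by decide)
  -- upper bound from the decomposition
  have hup : ∀ i : Fin 7,
      (Phi (cs i) (∑ t : Fin r, a t ⊗ₜ[ZMod 2] (v t ⊗ₜ[ZMod 2] w t))).rank ≤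
        ∑ t : Fin r, (∑ j, cs i j * a t j).val := by
    intro i
    rw [map_sum]
    refine rank_sum_le _ _ _ fun t _ => ?_
    rw [phi_tmul]
    exact rank_term_le _ _ _
  have hsum : (22 : ℕ) ≤ ∑ i : Fin 7, ∑ t : Fin r, (∑ j, cs i j * a t j).val := by
    have : (22 : ℕ) = ∑ i : Fin 7, N i := by decide
    rw [this]
    refine Finset.sum_le_sum fun i _ => ?_
    calc N i ≤ _ := hlow i
      _ = _ := by rw [h]
      _ ≤ _ := hup i
  rw [Finset.sum_comm] at hsum
  have h4 : ∑ t : Fin r, ∑ i : Fin 7, (∑ j, cs i j * a t j).val ≤ ∑ t : Fin r, 4 :=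
    Finset.sum_le_sum fun t _ => count_le (a t)
  simp only [Finset.sum_const, Finset.card_univ, Fintype.card_fin, smul_eq_mul] at h4
  omega
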